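/- arXiv:0810.3947 — 2 statements merged into one kernel-verified Lean document; each statement's English description precedes it below -/
import Mathlib

section
/- For each subset I of the ground set E of a matroid M with rank function r, the alternating sum Σ_{J⊆I} (−1)^{|I|−|J|} (r(E) − r(E−J)) equals the signed beta invariant β̃(M/(E−I)) of the contraction of M by the complement of I. -/
open Finset
open scoped Classical

/-- The beta invariant `β(M) = (−1)^{r(G)} ∑_{X⊆G} (−1)^{|X|} ρ(X)`. -/
def betaInv {α : Type*} [DecidableEq α] (G : Finset α) (ρ : Finset α → ℕ) : ℤ :=
  (-1) ^ (ρ G) * ∑ X ∈ G.powerset, (-1) ^ X.card * (ρ X : ℤ)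

/-- The signed beta invariant `β̃(M) = (−1)^{r(M)+1} β(M)`. -/
def betaT {α : Type*} [DecidableEq α] (G : Finset α) (ρ : Finset α → ℕ) : ℤ :=
  (-1) ^ (ρ G + 1) * betaInv G ρ

/-- The rank function of the contraction `M/A`. -/
def contr {α : Type*} [DecidableEq α] (r : Finset α → ℕ) (A : Finset α) :
    Finset α → ℕ :=
  fun X => r (A ∪ X) - r A

/-! Substituting `J = I \ X` turns the left-hand side into
`∑_{X⊆I} (−1)^{|X|} (r(E) − r((E−I) ∪ X))`. Splitting `r(E) − r((E−I) ∪ X)` as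
`(r(E) − r(E−I)) − r_{M/(E−I)}(X)`, the first part sums to `0` (an alternating sum over the
subsets of `I`, and `r(E) = r(E − I)` when `I = ∅`), while the second is `β̃(M/(E−I))`,
because the sign `(−1)^{ρ(G)+1} (−1)^{ρ(G)}` in `β̃` is always `−1`. -/

theorem Finset.sum_powerset_comp_sdiff {α β : Type*} [DecidableEq α] [AddCommMonoid β]
    (s : Finset α) (f : Finset α → β) :
    ∑ t ∈ s.powerset, f (s \ t) = ∑ t ∈ s.powerset, f t :=
  sum_nbij' (s \ ·) (s \ ·) (fun _ _ ↦ mem_powerset.2 sdiff_subset)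
    (fun _ _ ↦ mem_powerset.2 sdiff_subset)
    (fun _ ht ↦ sdiff_sdiff_eq_self (mem_powerset.1 ht))
    (fun _ ht ↦ sdiff_sdiff_eq_self (mem_powerset.1 ht))
    (fun _ _ ↦ rfl)

theorem betaT_eq_neg_sum {α : Type*} [DecidableEq α] (G : Finset α) (ρ : Finset α → ℕ) :
    betaT G ρ = -∑ X ∈ G.powerset, (-1) ^ X.card * (ρ X : ℤ) := by
  have hsign : (-1 : ℤ) ^ (ρ G + 1) * (-1) ^ ρ G = -1 := by
    rw [← pow_add, Odd.neg_one_pow ⟨ρ G, by ring⟩]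
  rw [betaT, betaInv, ← mul_assoc, hsign, neg_one_mul]

theorem natCast_contr {α : Type*} [DecidableEq α] {r : Finset α → ℕ} {A X : Finset α}
    (h : r A ≤ r (A ∪ X)) : (contr r A X : ℤ) = r (A ∪ X) - r A :=
  Nat.cast_sub h

theorem alternating_sum_eq_betaT_general {α : Type*} [DecidableEq α]
    (E : Finset α) (r : Finset α → ℕ)
    (hmono : ∀ A B, A ⊆ B → r A ≤ r B)
    (I : Finset α) (hI : I ⊆ E) :
    ∑ J ∈ I.powerset, (-1 : ℤ) ^ (I.card - J.card) * ((r E : ℤ) - (r (E \ J) : ℤ))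
      = betaT I (contr r (E \ I)) := by
  calc ∑ J ∈ I.powerset, (-1 : ℤ) ^ (I.card - J.card) * ((r E : ℤ) - (r (E \ J) : ℤ))
      = ∑ X ∈ I.powerset, (-1 : ℤ) ^ X.card * ((r E : ℤ) - r (E \ I ∪ X)) := by
        rw [← sum_powerset_comp_sdiff]
        refine sum_congr rfl fun X hX ↦ ?_
        have hXI := mem_powerset.1 hX
        rw [card_sdiff_of_subset hXI, Nat.sub_sub_self (card_le_card hXI),
          sdiff_sdiff_eq_sdiff_sup (hXI.trans hI)]
        rfl
    _ = ((r E : ℤ) - r (E \ I)) * ∑ X ∈ I.powerset, (-1 : ℤ) ^ X.card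
          - ∑ X ∈ I.powerset, (-1 : ℤ) ^ X.card * (contr r (E \ I) X : ℤ) := by
        rw [mul_sum, ← sum_sub_distrib]
        refine sum_congr rfl fun X _ ↦ ?_
        rw [natCast_contr (hmono _ _ subset_union_left)]
        ring
    _ = betaT I (contr r (E \ I)) := by
        rw [sum_powerset_neg_one_pow_card, betaT_eq_neg_sum]
        split_ifs with hI₀
        · simp [hI₀]
        · simp

/-- The computation in the proof of Theorem 2.6: for each `I ⊆ E`,
`∑_{J⊆I} (−1)^{|I|−|J|} (r(E) − r(E−J)) = β̃(M/(E−I))`, the contraction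
`M/(E−I)` being a matroid on the ground set `I`. -/
theorem alternating_sum_eq_betaT {α : Type*} [DecidableEq α]
    (E : Finset α) (r : Finset α → ℕ)
    (hcard : ∀ A, r A ≤ A.card)
    (hmono : ∀ A B, A ⊆ B → r A ≤ r B)
    (hsub : ∀ A B, r (A ∪ B) + r (A ∩ B) ≤ r A + r B)
    (hE : ∀ A, r (A ∩ E) = r A)
    (I : Finset α) (hI : I ⊆ E) :
    ∑ J ∈ I.powerset, (-1 : ℤ) ^ (I.card - J.card) * ((r E : ℤ) - (r (E \ J) : ℤ))
      = betaT I (contr r (E \ I)) :=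
  alternating_sum_eq_betaT_general E r hmono I hI
end

section
/- For a matroid M of rank r on E, the truncation flag matroid polytope decomposes as the signed Minkowski sum P_{F(M)} = Σ_{I⊆E} γ̃(M/I) Δ_{E−I}; equivalently, Σ_{i=1}^r P_{M_i} = Σ_{I⊆E} γ̃(M/I) Δ_{E−I}, where M_i is the rank-i truncation of M. -/
open Finset
open scoped Pointwise Classical

/-- The 0/1 indicator vector of a finite set `B`. -/
def indic {α : Type*} [DecidableEq α] (B : Finset α) : α → ℝ :=
  fun a => if a ∈ B then 1 else 0

/-- The matroid polytope: convex hull of the indicator vectors of the bases. -/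
def matroidPolytope {α : Type*} [DecidableEq α] (E : Finset α) (r : Finset α → ℕ) :
    Set (α → ℝ) :=
  convexHull ℝ {x | ∃ B : Finset α, B ⊆ E ∧ B.card = r E ∧ r B = r E ∧ x = indic B}

/-- `Δ_J = conv{e_i : i ∈ J}`. -/
def simplexFace {α : Type*} [DecidableEq α] (J : Finset α) : Set (α → ℝ) :=
  convexHull ℝ {x | ∃ i ∈ J, x = Pi.single i (1 : ℝ)}

/-- The gamma invariant `γ(N) = ∑_I (−1)^{r(N)−|I|} C(r(N) − r_N(I) + 1, 2)`
(the sign `(−1)^{r(N)−|I|}` is written as `(−1)^{r(N)+|I|}`, which agrees). -/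
def gammaInv {α : Type*} [DecidableEq α] (G : Finset α) (ρ : Finset α → ℕ) : ℤ :=
  ∑ I ∈ G.powerset, (-1) ^ (ρ G + I.card) * (Nat.choose (ρ G - ρ I + 1) 2 : ℤ)

/-- The signed gamma invariant `γ̃(N) = (−1)^{r(N)} γ(N)`. -/
def gammaT {α : Type*} [DecidableEq α] (G : Finset α) (ρ : Finset α → ℕ) : ℤ :=
  (-1) ^ (ρ G) * gammaInv G ρ

/-! Both sides are Minkowski sums of convex hulls of finite sets, so by Hahn–Banach it suffices
that their support functions agree. The simplex `Δ_{E∖I}` is the matroid polytope of the rank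
function `A ↦ min(1, |A ∖ I|)`, and by the greedy algorithm the support function of the matroid
polytope of a rank function `f` in a direction `w` is `∑ₖ w(lₖ) (f(l₀,…,lₖ) - f(l₀,…,lₖ₋₁))`,
where `l` lists `E` by decreasing weight. This is linear in `f`, so it suffices that
`∑_{i=1}^{r(E)} min(i, r(A)) = ∑_{I⊊E} γ̃(M/I) min(1, |A ∖ I|)` for every `A ⊆ E`. Now
`γ̃(M/I) = ∑_{I⊆K⊆E} (-1)^{|K∖I|} C(r(E) - r(K) + 1, 2)` and `min(1, |A ∖ I|) = 1 - [A ⊆ I]`, so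
Möbius inversion on the Boolean lattice turns the right side into
`C(r(E) + 1, 2) - C(r(E) - r(A) + 1, 2)`, which is the left side. -/

section SupportFunction

variable {V : Type*} [AddCommGroup V] [Module ℝ V] [TopologicalSpace V]

/-- The value on `∅` is junk (`0`). -/
noncomputable def supportFn (P : Finset V) (φ : V →L[ℝ] ℝ) : ℝ :=
  if h : P.Nonempty then P.sup' h φ else 0

theorem isGreatest_supportFn {P : Finset V} (hP : P.Nonempty) (φ : V →L[ℝ] ℝ) :
    IsGreatest (φ '' P) (supportFn P φ) := by
  obtain ⟨p, hp, hpmax⟩ := Finset.exists_mem_eq_sup' hP φ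
  rw [supportFn, dif_pos hP]
  exact ⟨⟨p, hp, hpmax.symm⟩, by rintro _ ⟨x, hx, rfl⟩; exact Finset.le_sup' _ hx⟩

theorem supportFn_eq_of_isGreatest {P : Finset V} {φ : V →L[ℝ] ℝ} {v : ℝ}
    (h : IsGreatest (φ '' P) v) : supportFn P φ = v := by
  obtain ⟨x, hx, -⟩ := h.1
  exact (isGreatest_supportFn ⟨x, hx⟩ φ).unique h

theorem supportFn_add {P Q : Finset V} (hP : P.Nonempty) (hQ : Q.Nonempty) (φ : V →L[ℝ] ℝ) :
    supportFn (P + Q) φ = supportFn P φ + supportFn Q φ := by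
  obtain ⟨⟨p, hp, hpφ⟩, hPle⟩ := isGreatest_supportFn hP φ
  obtain ⟨⟨q, hq, hqφ⟩, hQle⟩ := isGreatest_supportFn hQ φ
  refine supportFn_eq_of_isGreatest
    ⟨⟨p + q, Finset.add_mem_add hp hq, by rw [map_add, hpφ, hqφ]⟩, ?_⟩
  rintro _ ⟨x, hx, rfl⟩
  obtain ⟨p', hp', q', hq', rfl⟩ := Finset.mem_add.mp hx
  rw [map_add]
  exact add_le_add (hPle ⟨p', hp', rfl⟩) (hQle ⟨q', hq', rfl⟩)

theorem Finset.sum_nonempty {ι M : Type*} [AddCommMonoid M] {s : Finset ι} {P : ι → Finset M}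
    (hP : ∀ i ∈ s, (P i).Nonempty) : (∑ i ∈ s, P i).Nonempty :=
  sum_induction _ Finset.Nonempty (fun _ _ => .add) ⟨0, by simp⟩ hP

theorem supportFn_sum {ι : Type*} {s : Finset ι} {P : ι → Finset V}
    (hP : ∀ i ∈ s, (P i).Nonempty) (φ : V →L[ℝ] ℝ) :
    supportFn (∑ i ∈ s, P i) φ = ∑ i ∈ s, supportFn (P i) φ := by
  induction s using Finset.cons_induction with
  | empty => exact supportFn_eq_of_isGreatest (by simp)
  | cons a s ha ih =>
    simp only [Finset.forall_mem_cons] at hP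
    rw [Finset.sum_cons, Finset.sum_cons, supportFn_add hP.1 (sum_nonempty hP.2),
      ih hP.2]

theorem supportFn_smul {c : ℝ} (hc : 0 ≤ c) (P : Finset V) (φ : V →L[ℝ] ℝ) :
    supportFn (c • P) φ = c * supportFn P φ := by
  rcases P.eq_empty_or_nonempty with rfl | hP
  · simp [supportFn]
  obtain ⟨⟨p, hp, hpφ⟩, hPle⟩ := isGreatest_supportFn hP φ
  refine supportFn_eq_of_isGreatest ⟨⟨c • p, Finset.smul_mem_smul_finset hp, by
    rw [map_smul, hpφ, smul_eq_mul]⟩, ?_⟩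
  rintro _ ⟨x, hx, rfl⟩
  obtain ⟨y, hy, rfl⟩ := Finset.mem_smul_finset.mp hx
  rw [map_smul, smul_eq_mul]
  exact mul_le_mul_of_nonneg_left (hPle ⟨y, hy, rfl⟩) hc

variable [IsTopologicalAddGroup V] [ContinuousSMul ℝ V] [LocallyConvexSpace ℝ V] [T2Space V]

theorem convexHull_subset_of_supportFn_le {P Q : Finset V} (hQ : Q.Nonempty)
    (h : ∀ φ : V →L[ℝ] ℝ, supportFn P φ ≤ supportFn Q φ) :
    convexHull ℝ (P : Set V) ⊆ convexHull ℝ (Q : Set V) := by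
  refine convexHull_min (fun p hp => ?_) (convex_convexHull ℝ _)
  by_contra hpQ
  obtain ⟨φ, u, hQu, hup⟩ := geometric_hahn_banach_closed_point (convex_convexHull ℝ _)
    (Q.finite_toSet.isCompact_convexHull ℝ).isClosed hpQ
  obtain ⟨⟨q, hq, hqφ⟩, -⟩ := isGreatest_supportFn hQ φ
  have hp : φ p ≤ supportFn P φ := (isGreatest_supportFn ⟨p, hp⟩ φ).2 ⟨p, hp, rfl⟩
  have hq : φ q < u := hQu q (subset_convexHull ℝ _ hq)
  linarith [h φ]

theorem convexHull_eq_of_supportFn_eq {P Q : Finset V} (hP : P.Nonempty) (hQ : Q.Nonempty)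
    (h : ∀ φ : V →L[ℝ] ℝ, supportFn P φ = supportFn Q φ) :
    convexHull ℝ (P : Set V) = convexHull ℝ (Q : Set V) :=
  (convexHull_subset_of_supportFn_le hQ fun φ => (h φ).le).antisymm
    (convexHull_subset_of_supportFn_le hP fun φ => (h φ).ge)

end SupportFunction

section GammaInvariant

variable {α : Type*} [DecidableEq α]

theorem sum_Icc_neg_one_pow_card_sdiff {A K : Finset α} (h : A ⊆ K) :
    ∑ I ∈ Icc A K, (-1 : ℤ) ^ #(K \ I) = if A = K then 1 else 0 := by
  have hcompl : ∑ I ∈ Icc A K, (-1 : ℤ) ^ #(K \ I) = ∑ T ∈ (K \ A).powerset, (-1 : ℤ) ^ #T := by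
    refine Finset.sum_nbij' (K \ ·) (K \ ·) ?_ ?_ ?_ ?_ fun _ _ => rfl
    · intro I hI
      simp only [mem_Icc] at hI
      simpa using Finset.sdiff_subset_sdiff subset_rfl hI.1
    · intro T hT
      simp only [mem_powerset] at hT
      rw [mem_Icc]
      exact ⟨fun a ha => mem_sdiff.mpr ⟨h ha, fun haT => (mem_sdiff.mp (hT haT)).2 ha⟩,
        sdiff_subset⟩
    · intro I hI
      simp only [mem_Icc] at hI
      exact Finset.sdiff_sdiff_eq_self hI.2
    · intro T hT
      simp only [mem_powerset] at hT
      exact Finset.sdiff_sdiff_eq_self (hT.trans sdiff_subset)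
  simp only [hcompl, sum_powerset_neg_one_pow_card, sdiff_eq_empty_iff_subset]
  exact if_congr ⟨fun hKA => h.antisymm hKA, fun hAK => hAK ▸ subset_rfl⟩ rfl rfl

theorem sum_Icc_sum_Icc_neg_one_pow_mul (φ : Finset α → ℤ) {A E : Finset α} (hA : A ⊆ E) :
    ∑ I ∈ Icc A E, ∑ K ∈ Icc I E, (-1) ^ #(K \ I) * φ K = φ A := by
  calc ∑ I ∈ Icc A E, ∑ K ∈ Icc I E, (-1) ^ #(K \ I) * φ K
      = ∑ K ∈ Icc A E, (∑ I ∈ Icc A K, (-1 : ℤ) ^ #(K \ I)) * φ K := by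
        simp_rw [Finset.sum_mul]
        refine Finset.sum_comm' fun I K => ?_
        simp only [mem_Icc]
        exact ⟨fun h => ⟨⟨h.1.1, h.2.1⟩, h.1.1.trans h.2.1, h.2.2⟩,
          fun h => ⟨⟨h.1.1, h.1.2.trans h.2.2⟩, h.1.2, h.2.2⟩⟩
    _ = φ A := by
        rw [Finset.sum_congr rfl fun K hK => by
          rw [sum_Icc_neg_one_pow_card_sdiff (mem_Icc.mp hK).1, boole_mul]]
        simp [hA]

theorem gammaT_contr_eq {r : Finset α → ℕ} (hmono : ∀ A B, A ⊆ B → r A ≤ r B) {I E : Finset α}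
    (hI : I ⊆ E) :
    gammaT (E \ I) (contr r I)
      = ∑ K ∈ Icc I E, (-1) ^ #(K \ I) * ((r E - r K + 1).choose 2 : ℤ) := by
  have hinj : Set.InjOn (I ∪ ·) ((E \ I).powerset : Set (Finset α)) := by
    intro J hJ J' hJ' hJJ'
    simp only [coe_powerset, Set.mem_preimage, Set.mem_powerset_iff, coe_subset,
      subset_sdiff] at hJ hJ'
    rw [← union_sdiff_cancel_left hJ.2.symm, ← union_sdiff_cancel_left hJ'.2.symm]
    exact congrArg (· \ I) hJJ'
  rw [gammaT, gammaInv, Icc_eq_image_powerset hI, sum_image hinj, mul_sum]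
  refine sum_congr rfl fun J hJ => ?_
  have hJI : Disjoint I J := (subset_sdiff.mp (mem_powerset.mp hJ)).2.symm
  simp only [contr, union_sdiff_of_subset hI, union_sdiff_cancel_left hJI,
    Nat.sub_sub_sub_cancel_right (hmono I (I ∪ J) subset_union_left)]
  rw [pow_add, ← mul_assoc, ← mul_assoc, ← pow_add, ← two_mul, pow_mul, neg_one_sq, one_pow,
    one_mul]

theorem sum_Icc_min_add_choose (s a : ℕ) :
    ∑ i ∈ Icc 1 s, min i a + (s - a + 1).choose 2 = (s + 1).choose 2 := by
  have hchoose (n : ℕ) : (n + 1).choose 2 = n.choose 2 + n := by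
    rw [Nat.choose_succ_succ', Nat.choose_one_right, add_comm]
  induction s with
  | zero => simp
  | succ s ih =>
    rw [sum_Icc_succ_top (by omega), hchoose (s + 1), ← ih]
    rcases le_or_gt a s with has | has
    · rw [show s + 1 - a + 1 = (s - a + 1) + 1 by omega, hchoose (s - a + 1)]
      omega
    · simp only [show s + 1 - a = 0 by omega, show s - a = 0 by omega, zero_add]
      omega

theorem sum_gammaT_contr_mul_min_one {r : Finset α → ℕ} (hcard : ∀ A, r A ≤ #A)
    (hmono : ∀ A B, A ⊆ B → r A ≤ r B) {E A : Finset α} (hA : A ⊆ E) :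
    ∑ I ∈ E.powerset with I ≠ E, gammaT (E \ I) (contr r I) * (min 1 #(A \ I) : ℕ)
      = ∑ i ∈ Icc 1 (r E), (min i (r A) : ℤ) := by
  set γ := fun I => gammaT (E \ I) (contr r I)
  set φ := fun K => ((r E - r K + 1).choose 2 : ℤ)
  have hmin (I : Finset α) : ((min 1 #(A \ I) : ℕ) : ℤ) = 1 - if A ⊆ I then 1 else 0 := by
    by_cases hAI : A ⊆ I
    · simp [hAI, sdiff_eq_empty_iff_subset.mpr hAI]
    · have : min 1 #(A \ I) = 1 := min_eq_left (card_pos.mpr (sdiff_nonempty.mpr hAI))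
      simp [hAI, this]
  have hsum (B : Finset α) (hB : B ⊆ E) : ∑ I ∈ Icc B E, γ I = φ B := by
    rw [← sum_Icc_sum_Icc_neg_one_pow_mul φ hB]
    exact sum_congr rfl fun I hI => gammaT_contr_eq hmono (mem_Icc.mp hI).2
  have hr0 : r ∅ = 0 := Nat.le_zero.mp (hcard ∅)
  have hgauss : ∑ i ∈ Icc 1 (r E), (min i (r A) : ℤ) + φ A = φ ∅ := by
    simp only [φ, hr0, Nat.sub_zero]
    exact_mod_cast sum_Icc_min_add_choose (r E) (r A)
  calc ∑ I ∈ E.powerset with I ≠ E, γ I * (min 1 #(A \ I) : ℕ)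
      = ∑ I ∈ E.powerset, γ I * (min 1 #(A \ I) : ℕ) := by
        refine sum_filter_of_ne fun I _ hI hIE => hI ?_
        simp [hIE, sdiff_eq_empty_iff_subset.mpr hA]
    _ = ∑ I ∈ Icc ∅ E, γ I - ∑ I ∈ Icc A E, γ I := by
        simp only [hmin, mul_sub, mul_one, mul_ite, mul_zero, sum_sub_distrib, ← sum_filter,
          Icc_eq_filter_powerset, empty_subset, filter_true]
    _ = φ ∅ - φ A := by rw [hsum ∅ (empty_subset E), hsum A hA]
    _ = ∑ i ∈ Icc 1 (r E), (min i (r A) : ℤ) := by rw [← hgauss, add_sub_cancel_right]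

end GammaInvariant

section RankFunction

variable {α : Type*}

def bases (f : Finset α → ℕ) (E : Finset α) : Finset (Finset α) :=
  {B ∈ E.powerset | #B = f E ∧ f B = f E}

theorem mem_bases {f : Finset α → ℕ} {E B : Finset α} :
    B ∈ bases f E ↔ B ⊆ E ∧ #B = f E ∧ f B = f E := by
  simp [bases]

variable [DecidableEq α]

structure IsRankFn (f : Finset α → ℕ) : Prop where
  mono : ∀ ⦃A B : Finset α⦄, A ⊆ B → f A ≤ f B
  submod : ∀ A B : Finset α, f (A ∪ B) + f (A ∩ B) ≤ f A + f B
  le_card : ∀ A : Finset α, f A ≤ #A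

namespace IsRankFn

variable {f : Finset α → ℕ}

theorem map_empty (hf : IsRankFn f) : f ∅ = 0 :=
  Nat.le_zero.mp (hf.le_card ∅)

theorem insert_le (hf : IsRankFn f) (a : α) (A : Finset α) : f (insert a A) ≤ f A + 1 := by
  have h := hf.submod A {a}
  have ha : f {a} ≤ 1 := hf.le_card {a}
  rw [union_singleton] at h
  omega

theorem card_inter_le (hf : IsRankFn f) {B : Finset α} (hB : f B = #B) (X : Finset α) :
    #(B ∩ X) ≤ f X := by
  have h := hf.submod (B ∩ X) (B \ X)
  rw [show B ∩ X ∪ B \ X = B by grind, show B ∩ X ∩ (B \ X) = ∅ by grind, hf.map_empty] at h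
  have := hf.le_card (B \ X)
  have := card_inter_add_card_sdiff B X
  have := hf.mono (inter_subset_right : B ∩ X ⊆ X)
  omega

theorem insert_eq_of_subset (hf : IsRankFn f) {C X : Finset α} (hCX : C ⊆ X) (hC : f C = f X)
    (a : α) : f (insert a C) = f C + (f (insert a X) - f X) := by
  have hCa := hf.mono (insert_subset_insert a hCX)
  have := hf.mono (subset_insert a C)
  have := hf.mono (subset_insert a X)
  have := hf.insert_le a C
  by_cases haX : a ∈ X
  · rw [insert_eq_of_mem haX] at hCa ⊢
    omega
  · have h := hf.submod X (insert a C)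
    rw [union_insert, union_eq_left.mpr hCX, inter_insert_of_notMem haX,
      inter_eq_right.mpr hCX] at h
    omega

theorem truncate (hf : IsRankFn f) (i : ℕ) : IsRankFn fun A => min i (f A) where
  mono A B hAB := min_le_min_left i (hf.mono hAB)
  submod A B := by
    have := hf.submod A B
    have := hf.mono (subset_union_left : A ⊆ A ∪ B)
    have := hf.mono (subset_union_right : B ⊆ A ∪ B)
    have := hf.mono (inter_subset_left : A ∩ B ⊆ A)
    have := hf.mono (inter_subset_right : A ∩ B ⊆ B)
    omega
  le_card A := (min_le_right _ _).trans (hf.le_card A)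

end IsRankFn

theorem isRankFn_card_sdiff (I : Finset α) : IsRankFn fun A => #(A \ I) where
  mono A B hAB := card_le_card (sdiff_subset_sdiff hAB subset_rfl)
  submod A B := by
    rw [union_sdiff_distrib, show (A ∩ B) \ I = (A \ I) ∩ (B \ I) by grind,
      card_union_add_card_inter]
  le_card A := card_le_card sdiff_subset

end RankFunction

section Greedy

variable {α : Type*} [DecidableEq α]

def prefixSet (l : List α) (k : ℕ) : Finset α := (l.take k).toFinset

/-- `∑ₖ w(lₖ) (F(l₀,…,lₖ) - F(l₀,…,lₖ₋₁))`; for a rank function `F` and a list sorted by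
decreasing weight this is the weight the greedy algorithm collects. -/
noncomputable def greedyValue (w : α → ℝ) (l : List α) (F : Finset α → ℝ) : ℝ :=
  ∑ k ∈ range l.length, (l.map w).getD k 0 * (F (prefixSet l (k + 1)) - F (prefixSet l k))

section Prefix

variable (l : List α)

@[simp] theorem prefixSet_zero : prefixSet l 0 = ∅ := by simp [prefixSet]

theorem prefixSet_length : prefixSet l l.length = l.toFinset := by simp [prefixSet]

theorem prefixSet_subset (k : ℕ) : prefixSet l k ⊆ l.toFinset := fun _ ha =>
  List.mem_toFinset.mpr (List.take_subset k l (List.mem_toFinset.mp ha))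

theorem prefixSet_succ {k : ℕ} (hk : k < l.length) :
    prefixSet l (k + 1) = insert l[k] (prefixSet l k) := by
  rw [prefixSet, prefixSet, List.take_add_one, List.getElem?_eq_getElem hk, Option.toList_some,
    List.toFinset_append, insert_eq, union_comm]
  rfl

theorem getElem_notMem_prefixSet {l : List α} (hl : l.Nodup) {k : ℕ} (hk : k < l.length) :
    l[k] ∉ prefixSet l k := by
  rw [prefixSet, List.mem_toFinset, List.mem_take_iff_idxOf_lt (List.getElem_mem hk),
    hl.idxOf_getElem]
  exact lt_irrefl k

theorem prefixSet_of_length_le {k : ℕ} (hk : l.length ≤ k) : prefixSet l k = l.toFinset := by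
  rw [prefixSet, List.take_of_length_le hk]

end Prefix

variable {w : α → ℝ} {l : List α}

theorem greedyValue_congr {F G : Finset α → ℝ}
    (h : ∀ k, F (prefixSet l k) = G (prefixSet l k)) :
    greedyValue w l F = greedyValue w l G := by
  simp only [greedyValue, h]

theorem greedyValue_sum {ι : Type*} (s : Finset ι) (c : ι → ℝ) (F : ι → Finset α → ℝ) :
    greedyValue w l (fun A => ∑ i ∈ s, c i * F i A) = ∑ i ∈ s, c i * greedyValue w l (F i) := by
  simp only [greedyValue, mul_sum, ← sum_sub_distrib]
  rw [sum_comm]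
  refine sum_congr rfl fun k _ => sum_congr rfl fun i _ => by ring

theorem sum_eq_greedyValue_card_inter (hl : l.Nodup) {B : Finset α} (hB : B ⊆ l.toFinset) :
    ∑ b ∈ B, w b = greedyValue w l fun A => (#(B ∩ A) : ℝ) := by
  rw [greedyValue, sum_range_induction _ (fun k => ∑ b ∈ B ∩ prefixSet l k, w b) (by simp),
    prefixSet_length, inter_eq_left.mpr hB]
  intro k hk
  have ha := getElem_notMem_prefixSet hl hk
  rw [prefixSet_succ l hk]
  by_cases haB : l[k] ∈ B
  · rw [inter_insert_of_mem haB, sum_insert fun h => ha (mem_of_mem_inter_right h),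
      card_insert_of_notMem fun h => ha (mem_of_mem_inter_right h)]
    simp [hk]
    ring
  · simp [inter_insert_of_notMem haB]

theorem greedyValue_le_of_le (hw : l.Pairwise fun a b => w b ≤ w a) {F G : Finset α → ℝ}
    (h : ∀ k, F (prefixSet l k) ≤ G (prefixSet l k)) (h0 : F ∅ = G ∅)
    (hE : F l.toFinset = G l.toFinset) : greedyValue w l F ≤ greedyValue w l G := by
  set n := l.length
  set u := fun k => (l.map w).getD k 0
  set D := fun k => G (prefixSet l k) - F (prefixSet l k)
  have hparts := sum_range_by_parts u (fun k => D (k + 1) - D k) n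
  simp only [sum_range_sub, smul_eq_mul] at hparts
  have hD0 : D 0 = 0 := by simp [D, h0]
  have hDn : D n = 0 := by simp [D, n, prefixSet_length, hE]
  have hdiff : greedyValue w l G - greedyValue w l F
      = ∑ k ∈ range n, u k * (D (k + 1) - D k) := by
    rw [greedyValue, greedyValue, ← sum_sub_distrib]
    exact sum_congr rfl fun k _ => by ring
  rw [hD0, hDn] at hparts
  have hterm : ∀ i ∈ range (n - 1), (u (i + 1) - u i) * (D (i + 1) - 0) ≤ 0 := by
    intro i hi
    have hi : i + 1 < n := by simp at hi; omega
    have hu : u (i + 1) ≤ u i := by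
      simpa [u, List.getElem?_eq_getElem hi, List.getElem?_eq_getElem (by omega : i < n)] using
        List.pairwise_iff_getElem.mp hw i (i + 1) (by omega) hi (by omega)
    exact mul_nonpos_of_nonpos_of_nonneg (by linarith) (by simp [D, h])
  linarith [sum_nonpos hterm]

variable {f : Finset α → ℕ}

/-- The elements at which the rank of the prefixes of `l` jumps form a basis. -/
theorem IsRankFn.exists_mem_bases_card_inter_prefixSet (hf : IsRankFn f) (hl : l.Nodup) :
    ∃ B ∈ bases f l.toFinset, ∀ k, #(B ∩ prefixSet l k) = f (prefixSet l k) := by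
  set B := {a ∈ l.toFinset | f (prefixSet l (l.idxOf a + 1)) = f (prefixSet l (l.idxOf a)) + 1}
  have hinv (k : ℕ) : f (B ∩ prefixSet l k) = #(B ∩ prefixSet l k) ∧
      #(B ∩ prefixSet l k) = f (prefixSet l k) := by
    induction k with
    | zero => simp [hf.map_empty]
    | succ k ih =>
      rcases lt_or_ge k l.length with hk | hk
      · have hmemB : l[k] ∈ B ↔ f (prefixSet l (k + 1)) = f (prefixSet l k) + 1 := by
          simp [B, hl.idxOf_getElem, List.getElem_mem]
        have ha := getElem_notMem_prefixSet hl hk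
        have hstep := hf.insert_eq_of_subset inter_subset_right (ih.1.trans ih.2) l[k]
        have hle := hf.insert_le l[k] (prefixSet l k)
        have hge := hf.mono (subset_insert l[k] (prefixSet l k))
        rw [prefixSet_succ l hk] at hmemB ⊢
        by_cases haB : l[k] ∈ B
        · have hjump := hmemB.mp haB
          rw [inter_insert_of_mem haB,
            card_insert_of_notMem fun h => ha (mem_of_mem_inter_right h), hstep]
          omega
        · have hflat := mt hmemB.mpr haB
          rw [inter_insert_of_notMem haB]
          omega
      · rwa [prefixSet_of_length_le l (by omega : l.length ≤ k + 1),
          ← prefixSet_of_length_le l hk]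
  have hB := hinv l.length
  rw [prefixSet_length, inter_eq_left.mpr (filter_subset _ _)] at hB
  exact ⟨B, mem_bases.mpr ⟨filter_subset _ _, hB.2, hB.1.trans hB.2⟩, fun k => (hinv k).2⟩

theorem IsRankFn.bases_nonempty (hf : IsRankFn f) (E : Finset α) : (bases f E).Nonempty := by
  obtain ⟨B, hB, -⟩ := hf.exists_mem_bases_card_inter_prefixSet E.nodup_toList
  rw [E.toList_toFinset] at hB
  exact ⟨B, hB⟩

theorem IsRankFn.isGreatest_greedyValue (hf : IsRankFn f) (hl : l.Nodup) {w : α → ℝ}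
    (hw : l.Pairwise fun a b => w b ≤ w a) :
    IsGreatest ((fun B => ∑ b ∈ B, w b) '' bases f l.toFinset)
      (greedyValue w l fun A => f A) := by
  obtain ⟨B, hB, hBk⟩ := hf.exists_mem_bases_card_inter_prefixSet hl
  refine ⟨⟨B, hB, ?_⟩, ?_⟩
  · dsimp only
    rw [sum_eq_greedyValue_card_inter hl (mem_bases.mp hB).1]
    exact greedyValue_congr fun k => by rw [hBk]
  · rintro _ ⟨B, hB, rfl⟩
    obtain ⟨hBE, hBcard, hBf⟩ := mem_bases.mp hB
    dsimp only
    rw [sum_eq_greedyValue_card_inter hl hBE]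
    refine greedyValue_le_of_le hw (fun k => ?_) (by simp [hf.map_empty]) ?_
    · exact_mod_cast hf.card_inter_le (hBf.trans hBcard.symm) _
    · simp [inter_eq_left.mpr hBE, hBcard]

end Greedy

section Polytope

variable {α : Type*} [DecidableEq α]

theorem indic_eq_sum (B : Finset α) : indic B = ∑ b ∈ B, Pi.single b (1 : ℝ) := by
  ext a
  simp [indic, Finset.sum_apply, Pi.single_apply]

theorem matroidPolytope_eq_convexHull (E : Finset α) (f : Finset α → ℕ) :
    matroidPolytope E f = convexHull ℝ ↑((bases f E).image indic) := by
  rw [matroidPolytope]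
  congr 1
  ext x
  simp [mem_bases, and_assoc, eq_comm]

theorem simplexFace_sdiff_eq {E I : Finset α} (hI : I ⊆ E) (hIE : I ≠ E) :
    simplexFace (E \ I) = matroidPolytope E fun A => min 1 #(A \ I) := by
  have hE : min 1 #(E \ I) = 1 :=
    min_eq_left (card_pos.mpr (sdiff_nonempty.mpr fun h => hIE (hI.antisymm h)))
  rw [simplexFace, matroidPolytope, hE]
  congr 1
  ext x
  constructor
  · rintro ⟨i, hi, rfl⟩
    refine ⟨{i}, by simpa using (mem_sdiff.mp hi).1, card_singleton i, ?_, ?_⟩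
    · exact min_eq_left
        (card_pos.mpr ⟨i, mem_sdiff.mpr ⟨mem_singleton_self i, (mem_sdiff.mp hi).2⟩⟩)
    · simp [indic_eq_sum]
  · rintro ⟨B, hBE, hB, hBI, rfl⟩
    obtain ⟨i, rfl⟩ := card_eq_one.mp hB
    have hiI : i ∉ I := fun hiI => by
      rw [sdiff_eq_empty_iff_subset.mpr (singleton_subset_iff.mpr hiI)] at hBI
      simp at hBI
    exact ⟨i, mem_sdiff.mpr ⟨singleton_subset_iff.mp hBE, hiI⟩, by simp [indic_eq_sum]⟩

theorem exists_list_pairwise_ge (E : Finset α) (w : α → ℝ) :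
    ∃ l : List α, l.Nodup ∧ l.toFinset = E ∧ l.Pairwise fun a b => w b ≤ w a := by
  let ge : α → α → Prop := fun a b => w b ≤ w a
  have : Std.Total ge := ⟨fun a b => le_total (w b) (w a)⟩
  have : IsTrans α ge := ⟨fun _ _ _ hab hbc => hbc.trans hab⟩
  have hperm := E.toList.mergeSort_perm (ge · ·)
  exact ⟨_, hperm.nodup_iff.mpr E.nodup_toList,
    (List.toFinset_eq_of_perm _ _ hperm).trans E.toList_toFinset, List.pairwise_mergeSort' ge _⟩

theorem IsRankFn.supportFn_image_indic {f : Finset α → ℕ} (hf : IsRankFn f) {l : List α}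
    (hl : l.Nodup) {φ : (α → ℝ) →L[ℝ] ℝ}
    (hw : l.Pairwise fun a b => φ (Pi.single b 1) ≤ φ (Pi.single a 1)) :
    supportFn ((bases f l.toFinset).image indic) φ
      = greedyValue (fun a => φ (Pi.single a 1)) l fun A => f A := by
  refine supportFn_eq_of_isGreatest ?_
  rw [coe_image, Set.image_image]
  simpa [indic_eq_sum, map_sum] using hf.isGreatest_greedyValue hl hw

theorem sum_matroidPolytope_add_sum_neg_smul_eq {ι κ : Type*} (E : Finset α) (s : Finset ι)
    (f : ι → Finset α → ℕ) (t : Finset κ) (c : κ → ℤ) (g : κ → Finset α → ℕ)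
    (hf : ∀ i ∈ s, IsRankFn (f i)) (hg : ∀ j ∈ t, IsRankFn (g j))
    (h : ∀ A ⊆ E, ∑ i ∈ s, (f i A : ℤ) = ∑ j ∈ t, c j * g j A) :
    ∑ i ∈ s, matroidPolytope E (f i)
        + ∑ j ∈ t with c j < 0, (-(c j : ℝ)) • matroidPolytope E (g j)
      = ∑ j ∈ t with 0 ≤ c j, (c j : ℝ) • matroidPolytope E (g j) := by
  have hne {F : Finset α → ℕ} (hF : IsRankFn F) : ((bases F E).image indic).Nonempty :=
    (hF.bases_nonempty E).image indic
  simp only [matroidPolytope_eq_convexHull, ← convexHull_smul, ← coe_smul_finset,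
    ← convexHull_sum, ← coe_sum, ← convexHull_add, ← coe_add]
  have hV {p : κ → Prop} [DecidablePred p] {a : κ → ℝ} :
      ∀ j ∈ t.filter p, (a j • (bases (g j) E).image indic).Nonempty :=
    fun j hj => (hne (hg j (mem_filter.mp hj).1)).smul_finset
  refine convexHull_eq_of_supportFn_eq
    ((sum_nonempty fun i hi => hne (hf i hi)).add (sum_nonempty hV)) (sum_nonempty hV)
    fun φ => ?_
  obtain ⟨l, hl, rfl, hw⟩ := exists_list_pairwise_ge E fun a => φ (Pi.single a 1)
  set w := fun a => φ (Pi.single a 1)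
  have hsmul {p : κ → Prop} [DecidablePred p] {a : κ → ℝ} (ha : ∀ j ∈ t.filter p, 0 ≤ a j) :
      ∀ j ∈ t.filter p, supportFn (a j • (bases (g j) l.toFinset).image indic) φ
        = a j * greedyValue w l fun A => g j A := fun j hj => by
    rw [supportFn_smul (ha j hj), (hg j (mem_filter.mp hj).1).supportFn_image_indic hl hw]
  have hlin : ∑ i ∈ s, greedyValue w l (fun A => f i A)
      = ∑ j ∈ t, (c j : ℝ) * greedyValue w l fun A => g j A := by
    have := greedyValue_sum (w := w) (l := l) s (fun _ => 1) fun i A => f i A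
    simp only [one_mul] at this
    rw [← this, ← greedyValue_sum]
    exact greedyValue_congr fun k => by exact_mod_cast h _ (prefixSet_subset l k)
  rw [supportFn_add (sum_nonempty fun i hi => hne (hf i hi)) (sum_nonempty hV),
    supportFn_sum (fun i hi => hne (hf i hi)), supportFn_sum hV, supportFn_sum hV,
    sum_congr rfl fun i hi => (hf i hi).supportFn_image_indic hl hw,
    sum_congr rfl (hsmul fun j hj => by simpa using (mem_filter.mp hj).2.le),
    sum_congr rfl (hsmul fun j hj => by exact_mod_cast (mem_filter.mp hj).2), hlin,
    ← sum_filter_add_sum_filter_not t (0 ≤ c ·)]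
  simp only [not_le, neg_mul, sum_neg_distrib]
  ring

end Polytope

theorem truncation_flag_signed_sum_general {α : Type*} [DecidableEq α]
    (E : Finset α) (r : Finset α → ℕ)
    (hcard : ∀ A, r A ≤ A.card)
    (hmono : ∀ A B, A ⊆ B → r A ≤ r B)
    (hsub : ∀ A B, r (A ∪ B) + r (A ∩ B) ≤ r A + r B) :
    (∑ i ∈ Finset.Icc 1 (r E), matroidPolytope E (fun A => min i (r A))) +
        ∑ I ∈ E.powerset.filter
            (fun I => I ≠ E ∧ gammaT (E \ I) (contr r I) < 0),
          (-(gammaT (E \ I) (contr r I) : ℝ)) • simplexFace (E \ I)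
      = ∑ I ∈ E.powerset.filter
            (fun I => I ≠ E ∧ 0 ≤ gammaT (E \ I) (contr r I)),
          ((gammaT (E \ I) (contr r I) : ℝ)) • simplexFace (E \ I) := by
  have hr : IsRankFn r := ⟨fun A B => hmono A B, hsub, hcard⟩
  have key := sum_matroidPolytope_add_sum_neg_smul_eq E (Icc 1 (r E)) (fun i A => min i (r A))
    {I ∈ E.powerset | I ≠ E} (fun I => gammaT (E \ I) (contr r I)) (fun I A => min 1 #(A \ I))
    (fun i _ => hr.truncate i) (fun I _ => (isRankFn_card_sdiff I).truncate 1)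
    fun A hA => by exact_mod_cast (sum_gammaT_contr_mul_min_one hcard hmono hA).symm
  simp only [filter_filter] at key
  convert key using 3 with I hI I hI
  all_goals
    obtain ⟨hIE, hne, -⟩ := by simpa using hI
    rw [simplexFace_sdiff_eq hIE hne]

/-- Theorem 5.6: the truncation flag matroid polytope
`P_{F(M)} = P_{M_1} + ⋯ + P_{M_r}` (where `M_i` is the rank-`i` truncation of
`M`, with rank function `A ↦ min(i, r(A))`) satisfies the signed Minkowski sum
decomposition `P_{F(M)} = ∑_{I⊆E} γ̃(M/I) Δ_{E−I}`, i.e.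
`P_{F(M)} + ∑_{γ̃(M/I)<0} (−γ̃(M/I)) Δ_{E−I} = ∑_{γ̃(M/I)≥0} γ̃(M/I) Δ_{E−I}`. -/
theorem truncation_flag_signed_sum {α : Type*} [DecidableEq α]
    (E : Finset α) (r : Finset α → ℕ)
    (hcard : ∀ A, r A ≤ A.card)
    (hmono : ∀ A B, A ⊆ B → r A ≤ r B)
    (hsub : ∀ A B, r (A ∪ B) + r (A ∩ B) ≤ r A + r B)
    (hE : ∀ A, r (A ∩ E) = r A) :
    (∑ i ∈ Finset.Icc 1 (r E), matroidPolytope E (fun A => min i (r A))) +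
        ∑ I ∈ E.powerset.filter
            (fun I => I ≠ E ∧ gammaT (E \ I) (contr r I) < 0),
          (-(gammaT (E \ I) (contr r I) : ℝ)) • simplexFace (E \ I)
      = ∑ I ∈ E.powerset.filter
            (fun I => I ≠ E ∧ 0 ≤ gammaT (E \ I) (contr r I)),
          ((gammaT (E \ I) (contr r I) : ℝ)) • simplexFace (E \ I) :=
  truncation_flag_signed_sum_general E r hcard hmono hsub
end
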